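/- Selberg's identity for Kloosterman sums: for positive integers m, n, c, S(m, n; c) = ∑_{d | gcd(m, n, c)} d · S(mn/d², 1; c/d), where S(m, n; c) = ∑_{α mod c, gcd(α,c)=1} e((mα + n·α⁻¹)/c) and α⁻¹ denotes the multiplicative inverse of α modulo c. -/

import Mathlib

noncomputable def e (x : ℝ) : ℂ := Complex.exp (2 * Real.pi * Complex.I * x)

/-- The Kloosterman sum S(m,n;c) = ∑*_{α mod c} e((mα + nᾱ)/c). -/
noncomputable def kloos (m n c : ℕ) : ℂ :=
  ∑ α ∈ Finset.filter (fun α => Nat.Coprime α c) (Finset.range c),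
    e (((m * α + n * ((α : ZMod c)⁻¹).val : ℕ) : ℝ) / (c : ℝ))

/-!
Detecting `x y = 1` by orthogonality of the additive characters modulo `c` and then summing over
`y` first turns `S(m, n; c)` into `∑_u ∑_{x : n + u x ≡ 0} e((m x - u) / c)`. Group `u` by
`d = gcd(u, c)` and write `u = d v` with `v` a unit modulo `q = c / d`. The congruence
`n + d v x ≡ 0 (mod c)` forces `d ∣ n` and fixes `x ≡ -(n/d) v⁻¹ (mod q)`. If `d ∤ m`, the inner
sum is multiplied by `e(m q / c) ≠ 1` under `x ↦ x + q`, so it vanishes; if `d ∣ m`, each of the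
`d` lifts of that residue contributes `e(((m/d) x - v) / q)`. Finally `v ↦ -v⁻¹` turns the sum
over `v` into `S(mn/d², 1; q)`.
-/

open Finset ZMod

theorem AddMonoidHom.sum_comp_of_surjective {G H M : Type*} [AddGroup G] [Fintype G] [AddGroup H]
    [Fintype H] [DecidableEq H] [AddCommMonoid M] (φ : G →+ H) (hφ : Function.Surjective φ)
    (f : H → M) :
    ∑ x, f (φ x) = (Fintype.card G / Fintype.card H) • ∑ y, f y := by
  have hfiber (y : H) : #{x | φ x = y} = #{x | φ x = 0} :=
    AddMonoidHom.card_fiber_eq_of_mem_range φ (hφ y) (hφ 0)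
  have hcard : Fintype.card G = #{x | φ x = 0} * Fintype.card H := by
    rw [← card_univ, card_eq_sum_card_fiberwise (f := φ) (t := univ) fun _ _ => mem_univ _]
    simp [hfiber, mul_comm]
  rw [sum_comp f φ, image_univ_of_surjective hφ, hcard, Nat.mul_div_cancel _ Fintype.card_pos,
    smul_sum]
  simp_rw [hfiber]

theorem Fintype.sum_eq_zero_of_add_right {G K : Type*} [AddGroup G] [Fintype G] [CommRing K]
    [IsDomain K] (f : G → K) (a : G) {z : K} (hz : z ≠ 1) (hf : ∀ x, f (x + a) = z * f x) :
    ∑ x, f x = 0 := by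
  have h : ∑ x, f x = z * ∑ x, f x := calc
    ∑ x, f x = ∑ x, f (x + a) := (Equiv.sum_comp (Equiv.addRight a) f).symm
    _ = z * ∑ x, f x := by simp_rw [hf, mul_sum]
  have : (1 - z) * ∑ x, f x = 0 := by rw [sub_mul, one_mul, ← h, sub_self]
  exact (mul_eq_zero.1 this).resolve_left (sub_ne_zero.2 hz.symm)

theorem Fintype.sum_units_eq_sum_sum_ite_mul_eq_one {R M : Type*} [CommMonoid R] [Fintype R]
    [DecidableEq R] [AddCommMonoid M] (f : R → R → M) :
    ∑ u : Rˣ, f u ↑u⁻¹ = ∑ x, ∑ y, if x * y = 1 then f x y else 0 := by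
  rw [← Fintype.sum_prod_type', ← sum_filter]
  refine sum_bij' (fun u _ => (↑u, ↑u⁻¹))
    (fun p hp => Units.mkOfMulEqOne p.1 p.2 (mem_filter.1 hp).2)
    (by simp) (by simp) (fun u _ => Units.ext rfl) (fun p hp => ?_) (by simp)
  exact Prod.ext rfl (Units.inv_eq_of_mul_eq_one_right (mem_filter.1 hp).2)

theorem Nat.sum_range_eq_sum_divisors_sum_coprime {M : Type*} [AddCommMonoid M] (c : ℕ)
    (f : ℕ → M) :
    ∑ w ∈ range c, f w =
      ∑ d ∈ c.divisors, ∑ v ∈ range (c / d) with v.Coprime (c / d), f (d * v) := by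
  rw [← sum_fiberwise_of_maps_to (g := fun w => w.gcd c) (t := c.divisors)
    fun w hw => mem_divisors.2 ⟨gcd_dvd_right w c, Nat.ne_zero_of_lt (mem_range.1 hw)⟩]
  refine sum_congr rfl fun d hd => ?_
  obtain ⟨⟨q, rfl⟩, hc⟩ := mem_divisors.1 hd
  have hd0 : 0 < d := pos_of_ne_zero (left_ne_zero_of_mul hc)
  rw [Nat.mul_div_cancel_left q hd0]
  symm
  refine sum_nbij' (d * ·) (· / d) (fun v hv => ?_) (fun w hw => ?_)
    (fun v _ => Nat.mul_div_cancel_left v hd0) (fun w hw => ?_) (fun _ _ => rfl)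
  · simp only [mem_filter, mem_range] at hv ⊢
    exact ⟨Nat.mul_lt_mul_of_pos_left hv.1 hd0, by rw [Nat.gcd_mul_left, hv.2.gcd_eq_one, mul_one]⟩
  · simp only [mem_filter, mem_range] at hw ⊢
    obtain ⟨w, rfl⟩ : d ∣ w := hw.2 ▸ gcd_dvd_left w (d * q)
    rw [Nat.gcd_mul_left, Nat.mul_eq_left hd0.ne'] at hw
    rw [Nat.mul_div_cancel_left w hd0]
    exact ⟨lt_of_mul_lt_mul_left hw.1 hd0.le, hw.2⟩
  · exact Nat.mul_div_cancel' ((mem_filter.1 hw).2 ▸ gcd_dvd_left w _)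

section KloostermanSum

variable {R : Type*} [CommRing R] [Fintype R] [DecidableEq R] (ψ : AddChar R ℂ)

noncomputable def kloostermanSum (m n : R) : ℂ :=
  ∑ u : Rˣ, ψ (m * u + n * ↑u⁻¹)

noncomputable def solutionSum (m n u : R) : ℂ :=
  ∑ x, if n + u * x = 0 then ψ (m * x - u) else 0

theorem kloostermanSum_neg_swap (m n : R) :
    kloostermanSum ψ m n = kloostermanSum ψ (-n) (-m) := by
  unfold kloostermanSum
  rw [← Equiv.sum_comp ((Equiv.inv Rˣ).trans (Equiv.neg Rˣ))]
  refine Fintype.sum_congr _ _ fun u => ?_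
  simp only [Equiv.trans_apply, Equiv.inv_apply, Equiv.neg_apply, Units.val_neg, mul_neg,
    inv_neg, inv_inv, neg_mul]
  rw [add_comm]

theorem kloostermanSum_eq_sum_solutionSum (hψ : ψ.IsPrimitive) (m n : R) :
    kloostermanSum ψ m n = ∑ u, solutionSum ψ m n u := by
  have hcard : (Fintype.card R : ℂ) ≠ 0 := Nat.cast_ne_zero.2 Fintype.card_ne_zero
  apply mul_left_cancel₀ hcard
  -- summing `T` over `u` first detects `x y = 1`; summing over `y` first detects `n + u x = 0`
  set T := ∑ x, ∑ y, ∑ u, ψ (m * x + n * y + u * (x * y - 1)) with hT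
  have hT₁ : T = Fintype.card R * kloostermanSum ψ m n := by
    simp_rw [hT, AddChar.map_add_eq_mul, ← mul_sum, AddChar.sum_mulShift _ hψ, sub_eq_zero]
    rw [kloostermanSum, Fintype.sum_units_eq_sum_sum_ite_mul_eq_one fun x y => ψ (m * x + n * y)]
    simp_rw [mul_sum]
    refine sum_congr rfl fun x _ => sum_congr rfl fun y _ => ?_
    split_ifs <;> simp [mul_comm, AddChar.map_add_eq_mul]
  have hT₂ : T = Fintype.card R * ∑ u, solutionSum ψ m n u := by
    have harg (x y u : R) : m * x + n * y + u * (x * y - 1) = m * x - u + y * (n + u * x) := by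
      ring
    rw [hT, Finset.sum_congr rfl fun x _ => sum_comm, sum_comm]
    simp_rw [harg, AddChar.map_add_eq_mul, ← mul_sum, AddChar.sum_mulShift _ hψ, solutionSum,
      mul_sum]
    refine sum_congr rfl fun u _ => sum_congr rfl fun x _ => ?_
    split_ifs <;> simp [mul_comm]
  rw [← hT₁, hT₂]

end KloostermanSum

theorem e_natCast_div_eq_stdAddChar (c k : ℕ) [NeZero c] :
    e (k / c) = stdAddChar (k : ZMod c) := by
  rw [← Int.cast_natCast (R := ZMod c) k, stdAddChar_coe, e]
  push_cast
  ring_nf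

theorem ZMod.sum_eq_sum_range {M : Type*} [AddCommMonoid M] (c : ℕ) [NeZero c]
    (f : ZMod c → M) :
    ∑ x, f x = ∑ w ∈ range c, f w :=
  sum_nbij' val Nat.cast (by simp [val_lt]) (by simp) (by simp)
    (fun w hw => val_cast_of_lt (mem_range.1 hw)) (by simp)

theorem ZMod.sum_filter_coprime_range_eq_sum_units {M : Type*} [AddCommMonoid M] (c : ℕ)
    [NeZero c] (f : ZMod c → M) :
    ∑ α ∈ range c with α.Coprime c, f α = ∑ u : (ZMod c)ˣ, f u := by
  refine sum_bij' (fun α hα => unitOfCoprime α (mem_filter.1 hα).2) (fun u _ => (u : ZMod c).val)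
    (by simp) (fun u _ => ?_) (fun α hα => ?_) (fun u _ => Units.ext (natCast_zmod_val _))
    (by simp)
  · simpa [val_lt] using val_coe_unit_coprime u
  · simpa using val_cast_of_lt (mem_range.1 (mem_filter.1 hα).1)

theorem kloos_eq_kloostermanSum (m n c : ℕ) [NeZero c] :
    kloos m n c = kloostermanSum stdAddChar (m : ZMod c) n := by
  simp_rw [kloos, kloostermanSum, ← inv_coe_unit]
  rw [← sum_filter_coprime_range_eq_sum_units
    (f := fun x : ZMod c => stdAddChar ((m : ZMod c) * x + (n : ZMod c) * x⁻¹))]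
  refine sum_congr rfl fun α _ => ?_
  rw [e_natCast_div_eq_stdAddChar]
  push_cast [natCast_zmod_val]
  rfl

section Reduction

variable (d q : ℕ) [NeZero d] [NeZero q]

theorem ZMod.stdAddChar_natCast_mul (x : ZMod (d * q)) :
    stdAddChar ((d : ZMod (d * q)) * x) = stdAddChar (castHom (dvd_mul_left q d) (ZMod q) x) := by
  rw [castHom_apply, cast_eq_val]
  conv_lhs => rw [← natCast_zmod_val x, ← Nat.cast_mul]
  rw [← Int.cast_natCast, stdAddChar_coe, ← Int.cast_natCast (R := ZMod q), stdAddChar_coe]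
  have hd : (d : ℂ) ≠ 0 := Nat.cast_ne_zero.2 (NeZero.ne d)
  push_cast
  congr 1
  field_simp

theorem ZMod.natCast_mul_eq_zero_iff (x : ZMod (d * q)) :
    (d : ZMod (d * q)) * x = 0 ↔ castHom (dvd_mul_left q d) (ZMod q) x = 0 := by
  rw [← injective_stdAddChar.eq_iff, ← injective_stdAddChar.eq_iff, stdAddChar_natCast_mul,
    AddChar.map_zero_eq_one, AddChar.map_zero_eq_one]

theorem ZMod.sum_castHom {M : Type*} [AddCommMonoid M] (f : ZMod q → M) :
    ∑ x : ZMod (d * q), f (castHom (dvd_mul_left q d) (ZMod q) x) = d • ∑ y, f y := by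
  have := AddMonoidHom.sum_comp_of_surjective (castHom (dvd_mul_left q d) (ZMod q)).toAddMonoidHom
    (castHom_surjective (dvd_mul_left q d)) f
  rwa [ZMod.card, ZMod.card, Nat.mul_div_cancel _ (NeZero.pos q)] at this

variable (m n v : ℕ)

theorem solutionSum_natCast_mul_eq_zero_of_not_dvd_left (hm : ¬ d ∣ m) :
    solutionSum stdAddChar (m : ZMod (d * q)) n (d * v) = 0 := by
  refine Fintype.sum_eq_zero_of_add_right _ (q : ZMod (d * q))
    (z := stdAddChar ((m * q : ℕ) : ZMod (d * q))) ?_ fun x => ?_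
  · rwa [← (stdAddChar (N := d * q)).map_zero_eq_one, injective_stdAddChar.ne_iff, Ne,
      natCast_eq_zero_iff, Nat.mul_dvd_mul_iff_right (NeZero.pos q)]
  · have hdq : (d : ZMod (d * q)) * q = 0 := by rw [← Nat.cast_mul, natCast_self]
    have h₁ : (n : ZMod (d * q)) + d * v * (x + q) = n + d * v * x := by
      linear_combination (v : ZMod (d * q)) * hdq
    have h₂ : (m * (x + q) - d * v : ZMod (d * q)) = m * x - d * v + (m * q : ℕ) := by
      push_cast
      ring
    simp only [h₁, h₂, AddChar.map_add_eq_mul]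
    split_ifs <;> ring

theorem solutionSum_natCast_mul_eq_zero_of_not_dvd_right (hn : ¬ d ∣ n) :
    solutionSum stdAddChar (m : ZMod (d * q)) n (d * v) = 0 := by
  refine sum_eq_zero fun x _ => if_neg fun hx => hn ?_
  simpa [natCast_eq_zero_iff] using congrArg (castHom (dvd_mul_right d q) (ZMod d)) hx

theorem solutionSum_natCast_mul_of_coprime (hv : v.Coprime q) :
    solutionSum stdAddChar ((d * m : ℕ) : ZMod (d * q)) (d * n : ℕ) (d * v) =
      d * stdAddChar (-(m * n : ZMod q) * (v : ZMod q)⁻¹ - v : ZMod q) := by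
  let π := castHom (dvd_mul_left q d) (ZMod q)
  have hsummand (x : ZMod (d * q)) :
      (if ((d * n : ℕ) : ZMod (d * q)) + d * v * x = 0
        then stdAddChar (((d * m : ℕ) : ZMod (d * q)) * x - d * v : ZMod (d * q)) else 0) =
      if (n : ZMod q) + v * π x = 0 then stdAddChar ((m : ZMod q) * π x - v : ZMod q) else 0 := by
    have h₁ : ((d * n : ℕ) : ZMod (d * q)) + d * v * x = d * (n + v * x) := by push_cast; ring
    have h₂ : ((d * m : ℕ) : ZMod (d * q)) * x - d * v = d * (m * x - v) := by push_cast; ring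
    simp only [h₁, h₂, natCast_mul_eq_zero_iff, stdAddChar_natCast_mul, map_add, map_sub,
      map_mul, map_natCast, π]
  have hvv : (v : ZMod q) * (v : ZMod q)⁻¹ = 1 := mul_inv_of_unit _ ((isUnit_iff_coprime v q).2 hv)
  have hsol (y : ZMod q) : (n : ZMod q) + v * y = 0 ↔ -n * (v : ZMod q)⁻¹ = y := by
    constructor
    · intro h
      linear_combination (-(v : ZMod q)⁻¹) * h + y * hvv
    · rintro rfl
      linear_combination (-(n : ZMod q)) * hvv
  rw [solutionSum, sum_congr rfl fun x _ => hsummand x,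
    sum_castHom d q fun y =>
      if (n : ZMod q) + v * y = 0 then stdAddChar (m * y - v : ZMod q) else 0]
  simp_rw [hsol, sum_ite_eq, if_pos (mem_univ _), nsmul_eq_mul]
  ring_nf

end Reduction

theorem sum_coprime_solutionSum_natCast_mul (m n c d : ℕ) [NeZero c] (hd : d ∣ c) :
    ∑ v ∈ range (c / d) with v.Coprime (c / d),
        solutionSum stdAddChar (m : ZMod c) n ((d * v : ℕ) : ZMod c) =
      if d ∣ m ∧ d ∣ n then d * kloos (m * n / d ^ 2) 1 (c / d) else 0 := by
  obtain ⟨q, rfl⟩ := hd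
  have : NeZero d := ⟨left_ne_zero_of_mul (NeZero.ne (d * q))⟩
  have : NeZero q := ⟨right_ne_zero_of_mul (NeZero.ne (d * q))⟩
  rw [Nat.mul_div_cancel_left q (NeZero.pos d)]
  simp_rw [Nat.cast_mul]
  split_ifs with h
  · obtain ⟨⟨m, rfl⟩, n, rfl⟩ := h
    rw [sum_congr rfl fun v hv => solutionSum_natCast_mul_of_coprime d q m n v (mem_filter.1 hv).2,
      ← mul_sum, kloos_eq_kloostermanSum, kloostermanSum_neg_swap, kloostermanSum,
      sum_filter_coprime_range_eq_sum_units
        (f := fun y : ZMod q => stdAddChar (-(m * n : ZMod q) * y⁻¹ - y : ZMod q)),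
      mul_mul_mul_comm, ← sq, Nat.mul_div_cancel_left _ (pow_pos (NeZero.pos d) 2)]
    refine congrArg _ (Fintype.sum_congr _ _ fun u => ?_)
    rw [inv_coe_unit]
    push_cast
    ring_nf
  · refine sum_eq_zero fun v _ => ?_
    rcases not_and_or.1 h with hm | hn
    · exact solutionSum_natCast_mul_eq_zero_of_not_dvd_left d q m n v hm
    · exact solutionSum_natCast_mul_eq_zero_of_not_dvd_right d q m n v hn

theorem selberg_identity_general (m n c : ℕ) :
    kloos m n c = ∑ d ∈ (Nat.gcd m (Nat.gcd n c)).divisors,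
      (d : ℂ) * kloos (m * n / d ^ 2) 1 (c / d) := by
  rcases c.eq_zero_or_pos with rfl | hc
  · simp [kloos]
  have : NeZero c := ⟨hc.ne'⟩
  have hgcd : m.gcd (n.gcd c) ≠ 0 :=
    (Nat.gcd_pos_of_pos_right _ (Nat.gcd_pos_of_pos_right _ hc)).ne'
  rw [kloos_eq_kloostermanSum, kloostermanSum_eq_sum_solutionSum _ (isPrimitive_stdAddChar c),
    ZMod.sum_eq_sum_range, Nat.sum_range_eq_sum_divisors_sum_coprime,
    sum_congr rfl fun d hd =>
      sum_coprime_solutionSum_natCast_mul m n c d (Nat.dvd_of_mem_divisors hd),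
    ← sum_filter]
  congr 1
  ext d
  simp only [mem_filter, Nat.mem_divisors, Nat.dvd_gcd_iff]
  exact ⟨fun ⟨⟨hdc, _⟩, hdm, hdn⟩ => ⟨⟨hdm, hdn, hdc⟩, hgcd⟩,
    fun ⟨⟨hdm, hdn, hdc⟩, _⟩ => ⟨⟨hdc, hc.ne'⟩, hdm, hdn⟩⟩

/-- Selberg's identity: S(m,n;c) = ∑_{d | (m,n,c)} d·S(mn/d², 1; c/d). -/
theorem selberg_identity (m n c : ℕ) (hm : 0 < m) (hn : 0 < n) (hc : 0 < c) :
    kloos m n c = ∑ d ∈ (Nat.gcd m (Nat.gcd n c)).divisors,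
      (d : ℂ) * kloos (m * n / d ^ 2) 1 (c / d) :=
  selberg_identity_general m n c
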